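/- arXiv:2108.05274 — 2 statements merged into one kernel-verified Lean document; each statement's English description precedes it below -/
import Mathlib

section
/- Let v ∈ ℝⁿ and let q be v sorted in nonincreasing order. Define ρ = max{1 ≤ j ≤ n : q_j + (1/j)(1 − ∑_{i=1}^j q_i) > 0} and ξ = (1/ρ)(1 − ∑_{i=1}^ρ q_i). Then the vector w with w_i = max{v_i + ξ, 0} lies in the probability simplex (w_i ≥ 0 and ∑ w_i = 1). -/
/-!
Let `t_j = (1 - (q_0 + ⋯ + q_j)) / (j + 1)`, so that `ξ = t_ρ`. Clearing denominators gives
`(j + 2) (q_{j+1} + t_{j+1}) = (j + 1) (q_{j+1} + t_j)`. Hence the maximality of `ρ` says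
`q_{ρ+1} + ξ ≤ 0`, and since `q` is nonincreasing the coordinates with `q_i + ξ > 0` are exactly
`i ≤ ρ`. Summing `q_i + ξ` over these gives `(q_0 + ⋯ + q_ρ) + (ρ + 1) ξ = 1`, and permuting the
coordinates does not change the sum.
-/

open Finset

lemma Finset.sum_max_zero_eq_sum_filter_pos {ι : Type*} (s : Finset ι) (f : ι → ℝ) :
    ∑ i ∈ s, max (f i) 0 = ∑ i ∈ s with 0 < f i, f i := by
  rw [sum_filter]
  refine sum_congr rfl fun i _ => ?_
  split_ifs with h
  exacts [max_eq_left h.le, max_eq_right (not_lt.1 h)]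

lemma Fin.Iic_eq_insert_Iic_of_val_eq_succ {n : ℕ} {i j : Fin n} (h : (j : ℕ) = i + 1) :
    Iic j = insert j (Iic i) := by
  ext x
  simp only [mem_Iic, mem_insert, Fin.le_def, Fin.ext_iff]
  omega

namespace SimplexProjection

variable {n : ℕ} (q : Fin n → ℝ)

/-- The paper's `(1/j) (1 - ∑_{i ≤ j} q_i)`, with the index `j` shifted to start at `0`. -/
noncomputable def shift (j : Fin n) : ℝ :=
  1 / ((j : ℕ) + 1 : ℝ) * (1 - ∑ i ∈ Iic j, q i)

lemma succ_mul_shift (j : Fin n) : ((j : ℕ) + 1 : ℝ) * shift q j = 1 - ∑ i ∈ Iic j, q i := by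
  unfold shift
  field_simp

lemma succ_mul_add_shift_of_val_eq_succ {i j : Fin n} (h : (j : ℕ) = i + 1) :
    ((j : ℕ) + 1 : ℝ) * (q j + shift q j) = ((i : ℕ) + 1 : ℝ) * (q j + shift q i) := by
  have hj : j ∉ Iic i := by simp [Fin.le_def, h]
  rw [mul_add, mul_add, succ_mul_shift, succ_mul_shift,
    Fin.Iic_eq_insert_Iic_of_val_eq_succ h, sum_insert hj, h]
  push_cast
  ring

lemma sum_Iic_add_shift (j : Fin n) : ∑ i ∈ Iic j, (q i + shift q j) = 1 := by
  rw [sum_add_distrib, sum_const, Fin.card_Iic, nsmul_eq_mul, Nat.cast_add_one, succ_mul_shift]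
  ring

variable {q}

lemma add_shift_nonpos_of_lt (hq : Antitone q) {ρ : Fin n}
    (hmax : ∀ j, 0 < q j + shift q j → j ≤ ρ) {i : Fin n} (hi : ρ < i) :
    q i + shift q ρ ≤ 0 := by
  let j : Fin n := ⟨ρ + 1, by omega⟩
  have hji : j ≤ i := Fin.le_def.2 hi
  have hj : q j + shift q j ≤ 0 :=
    not_lt.1 fun hpos => absurd (hmax j hpos) (by simp [j, Fin.le_def])
  have hscaled : ((ρ : ℕ) + 1 : ℝ) * (q j + shift q ρ) ≤ 0 := by
    rw [← succ_mul_add_shift_of_val_eq_succ q rfl]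
    exact mul_nonpos_of_nonneg_of_nonpos (by positivity) hj
  linarith [hq hji, nonpos_of_mul_nonpos_right hscaled (by positivity : (0 : ℝ) < (ρ : ℕ) + 1)]

lemma add_shift_pos_iff (hq : Antitone q) {ρ : Fin n} (hmem : 0 < q ρ + shift q ρ)
    (hmax : ∀ j, 0 < q j + shift q j → j ≤ ρ) (i : Fin n) :
    0 < q i + shift q ρ ↔ i ≤ ρ := by
  refine ⟨fun hpos => not_lt.1 fun hi => ?_, fun hi => by linarith [hq hi]⟩
  linarith [add_shift_nonpos_of_lt hq hmax hi]

lemma sum_max_add_shift (hq : Antitone q) {ρ : Fin n} (hmem : 0 < q ρ + shift q ρ)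
    (hmax : ∀ j, 0 < q j + shift q j → j ≤ ρ) :
    ∑ i, max (q i + shift q ρ) 0 = 1 := by
  rw [sum_max_zero_eq_sum_filter_pos, ← sum_Iic_add_shift q ρ]
  congr 1
  ext i
  simp [add_shift_pos_iff hq hmem hmax]

end SimplexProjection

open SimplexProjection in
theorem simplex_projection_formula_general (n : ℕ) (v q : Fin n → ℝ)
    (hperm : ∃ σ : Equiv.Perm (Fin n), q = v ∘ σ)
    (hsorted : ∀ i j : Fin n, i ≤ j → q j ≤ q i)
    (ρ : Fin n)
    (hρmem : q ρ + (1 / ((ρ : ℕ) + 1 : ℝ)) * (1 - ∑ i ∈ Finset.Iic ρ, q i) > 0)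
    (hρmax : ∀ j : Fin n, q j + (1 / ((j : ℕ) + 1 : ℝ)) * (1 - ∑ i ∈ Finset.Iic j, q i) > 0 → j ≤ ρ)
    (ξ : ℝ) (hξ : ξ = (1 / ((ρ : ℕ) + 1 : ℝ)) * (1 - ∑ i ∈ Finset.Iic ρ, q i)) :
    (∀ i, 0 ≤ max (v i + ξ) 0) ∧ ∑ i, max (v i + ξ) 0 = 1 := by
  refine ⟨fun i => le_max_right _ _, ?_⟩
  obtain ⟨σ, rfl⟩ := hperm
  subst hξ
  rw [← Equiv.sum_comp σ]
  exact sum_max_add_shift hsorted hρmem hρmax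

theorem simplex_projection_formula (n : ℕ) (hn : 1 ≤ n) (v q : Fin n → ℝ)
    (hperm : ∃ σ : Equiv.Perm (Fin n), q = v ∘ σ)
    (hsorted : ∀ i j : Fin n, i ≤ j → q j ≤ q i)
    (ρ : Fin n)
    (hρmem : q ρ + (1 / ((ρ : ℕ) + 1 : ℝ)) * (1 - ∑ i ∈ Finset.Iic ρ, q i) > 0)
    (hρmax : ∀ j : Fin n, q j + (1 / ((j : ℕ) + 1 : ℝ)) * (1 - ∑ i ∈ Finset.Iic j, q i) > 0 → j ≤ ρ)
    (ξ : ℝ) (hξ : ξ = (1 / ((ρ : ℕ) + 1 : ℝ)) * (1 - ∑ i ∈ Finset.Iic ρ, q i)) :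
    (∀ i, 0 ≤ max (v i + ξ) 0) ∧ ∑ i, max (v i + ξ) 0 = 1 :=
  simplex_projection_formula_general n v q hperm hsorted ρ hρmem hρmax ξ hξ
end

section
/- Let v ∈ ℝⁿ and let w* be the Euclidean projection of v onto the probability simplex. Then there exists ξ ∈ ℝ such that w*_i = max{v_i + ξ, 0} for all i. -/
/-!
Since the simplex is convex, the minimizer `w` satisfies the variational inequality
`⟪w - v, u - w⟫ ≥ 0` for every `u` in the simplex. Taking for `u` the vertices `e_j` gives
`w_j - v_j ≥ c := ⟪w - v, w⟫` for all `j`. On the other hand `∑ w_j (w_j - v_j - c) = c - c = 0`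
is a sum of nonnegative terms, so `w_j - v_j = c` wherever `w_j > 0`; hence `ξ = c` works.
-/

open Finset Filter Topology

section

variable {ι : Type*} [Fintype ι] {v w u : ι → ℝ}

theorem sum_sq_add_mul_sub_sub (t : ℝ) :
    ∑ i, (w i + t * (u i - w i) - v i) ^ 2 =
      ∑ i, (w i - v i) ^ 2 + 2 * t * ∑ i, (w i - v i) * (u i - w i) +
        t ^ 2 * ∑ i, (u i - w i) ^ 2 := by
  simp only [mul_sum, ← sum_add_distrib]
  exact sum_congr rfl fun i _ => by ring

theorem Convex.sum_sub_mul_sub_nonneg_of_isMinOn {s : Set (ι → ℝ)} (hs : Convex ℝ s)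
    (hmin : IsMinOn (fun x => ∑ i, (x i - v i) ^ 2) s w) (hw : w ∈ s) (hu : u ∈ s) :
    0 ≤ ∑ i, (w i - v i) * (u i - w i) := by
  set A := ∑ i, (w i - v i) * (u i - w i)
  set B := ∑ i, (u i - w i) ^ 2
  have hsegment : ∀ t ∈ Set.Ioc (0 : ℝ) 1, 0 ≤ 2 * A + t * B := by
    rintro t ⟨ht₀, ht₁⟩
    have hmem : w + t • (u - w) ∈ s := hs.add_smul_sub_mem hw hu ⟨ht₀.le, ht₁⟩
    have h : ∑ i, (w i - v i) ^ 2 ≤ ∑ i, (w i + t * (u i - w i) - v i) ^ 2 := hmin hmem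
    rw [sum_sq_add_mul_sub_sub] at h
    exact (mul_nonneg_iff_of_pos_left ht₀).1 (by linarith)
  have hlim : Tendsto (fun t => 2 * A + t * B) (𝓝[>] 0) (𝓝 (2 * A + 0 * B)) :=
    ((continuous_const.add (continuous_id.mul continuous_const)).tendsto 0).mono_left
      nhdsWithin_le_nhds
  have := ge_of_tendsto hlim (eventually_of_mem (Ioc_mem_nhdsGT zero_lt_one) hsegment)
  linarith

variable [DecidableEq ι]

theorem sum_sub_mul_le_sub_of_isMinOn_stdSimplex
    (hmin : IsMinOn (fun x => ∑ i, (x i - v i) ^ 2) (stdSimplex ℝ ι) w)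
    (hw : w ∈ stdSimplex ℝ ι) (j : ι) :
    ∑ i, (w i - v i) * w i ≤ w j - v j := by
  have := (convex_stdSimplex ℝ ι).sum_sub_mul_sub_nonneg_of_isMinOn hmin hw
    (single_mem_stdSimplex ℝ j)
  simp only [mul_sub, sum_sub_distrib] at this
  simpa [Pi.single_apply] using this

theorem sub_eq_of_isMinOn_stdSimplex_of_pos
    (hmin : IsMinOn (fun x => ∑ i, (x i - v i) ^ 2) (stdSimplex ℝ ι) w)
    (hw : w ∈ stdSimplex ℝ ι) {j : ι} (hj : 0 < w j) :
    w j - v j = ∑ i, (w i - v i) * w i := by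
  set c := ∑ i, (w i - v i) * w i
  have hterm_nonneg : ∀ i ∈ univ, 0 ≤ w i * (w i - v i - c) := fun i _ =>
    mul_nonneg (hw.1 i) (sub_nonneg.2 (sum_sub_mul_le_sub_of_isMinOn_stdSimplex hmin hw i))
  have hsum : ∑ i, w i * (w i - v i - c) = 0 :=
    calc ∑ i, w i * (w i - v i - c) = c - (∑ i, w i) * c := by
          rw [sum_mul, ← sum_sub_distrib]
          exact sum_congr rfl fun i _ => by ring
      _ = 0 := by rw [hw.2, one_mul, sub_self]
  have := (sum_eq_zero_iff_of_nonneg hterm_nonneg).1 hsum j (mem_univ j)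
  linarith [(mul_eq_zero.1 this).resolve_left hj.ne']

theorem exists_eq_max_add_of_isMinOn_stdSimplex
    (hmin : IsMinOn (fun x => ∑ i, (x i - v i) ^ 2) (stdSimplex ℝ ι) w)
    (hw : w ∈ stdSimplex ℝ ι) :
    ∃ ξ : ℝ, ∀ i, w i = max (v i + ξ) 0 := by
  refine ⟨∑ i, (w i - v i) * w i, fun i => ?_⟩
  rcases (hw.1 i).eq_or_lt with hzero | hpos
  · have := sum_sub_mul_le_sub_of_isMinOn_stdSimplex hmin hw i
    rw [← hzero] at this ⊢
    exact (max_eq_right (by linarith)).symm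
  · have := sub_eq_of_isMinOn_stdSimplex_of_pos hmin hw hpos
    rw [max_eq_left] <;> linarith

end

theorem simplex_projection_soft_threshold_general (n : ℕ) (v w : Fin n → ℝ)
    (hw : (∀ i, 0 ≤ w i) ∧ ∑ i, w i = 1)
    (hmin : ∀ w' : Fin n → ℝ, (∀ i, 0 ≤ w' i) → ∑ i, w' i = 1 →
      ∑ i, (w i - v i) ^ 2 ≤ ∑ i, (w' i - v i) ^ 2) :
    ∃ ξ : ℝ, ∀ i, w i = max (v i + ξ) 0 :=
  exists_eq_max_add_of_isMinOn_stdSimplex (fun w' hw' => hmin w' hw'.1 hw'.2) hw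

theorem simplex_projection_soft_threshold (n : ℕ) (hn : 1 ≤ n) (v w : Fin n → ℝ)
    (hw : (∀ i, 0 ≤ w i) ∧ ∑ i, w i = 1)
    (hmin : ∀ w' : Fin n → ℝ, (∀ i, 0 ≤ w' i) → ∑ i, w' i = 1 →
      ∑ i, (w i - v i) ^ 2 ≤ ∑ i, (w' i - v i) ^ 2) :
    ∃ ξ : ℝ, ∀ i, w i = max (v i + ξ) 0 :=
  simplex_projection_soft_threshold_general n v w hw hmin
end
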